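/- Let (S, Σ) be a measurable space and f : S × ℝ^L → ℝ^L be Σ-measurable in the first argument for every fixed x, continuous in the second argument for every fixed α ∈ S, and suppose that for every α ∈ S the equation f(α, x) = 0 has a unique solution x = g(α). Then g : S → ℝ^L is Σ-measurable. -/

import Mathlib

/-!
Closed sets of `X` are countable unions of compact sets, so it suffices that `g⁻¹' K` is
measurable for compact `K`. Choosing a countable `C ⊆ K` dense in `K`, continuity of `f α`
and compactness of `K` show that `g α ∈ K` iff `inf_{c ∈ C} ‖f α c‖ = 0` (the infimum over `K`
is attained at a zero of `f α`, which by uniqueness is `g α`); this is a countable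
combination of the measurable sets `{α | ‖f α c‖ < 1 / (m + 1)}`.
-/

open Set TopologicalSpace

theorem IsCompact.exists_eq_zero_of_forall_exists_norm_lt {X E : Type*} [TopologicalSpace X]
    [NormedAddCommGroup E] {φ : X → E} (hφ : Continuous φ) {K : Set X} (hK : IsCompact K)
    (hsmall : ∀ ε > 0, ∃ x ∈ K, ‖φ x‖ < ε) : ∃ x ∈ K, φ x = 0 := by
  obtain ⟨x₀, hx₀K, -⟩ := hsmall 1 one_pos
  obtain ⟨x, hxK, hmin⟩ := hK.exists_isMinOn ⟨x₀, hx₀K⟩ hφ.norm.continuousOn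
  refine ⟨x, hxK, norm_le_zero_iff.mp (le_of_forall_pos_le_add fun ε hε => ?_)⟩
  obtain ⟨y, hyK, hy⟩ := hsmall ε hε
  linarith [isMinOn_iff.mp hmin y hyK]

section

variable {S X E : Type*} [TopologicalSpace X] [NormedAddCommGroup E]
  {f : S → X → E} {g : S → X}

theorem preimage_eq_iInter_iUnion_norm_lt (hcont : ∀ α, Continuous (f α))
    (hg : ∀ α, f α (g α) = 0) (huniq : ∀ α x, f α x = 0 → x = g α) {K C : Set X}
    (hK : IsCompact K) (hCK : C ⊆ K) (hKC : K ⊆ closure C) :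
    g ⁻¹' K = ⋂ m : ℕ, ⋃ c ∈ C, {α | ‖f α c‖ < 1 / (m + 1)} := by
  ext α
  simp only [mem_preimage, mem_iInter, mem_iUnion, mem_ofPred_eq, exists_prop]
  constructor
  · intro hα m
    have hopen : IsOpen {x | ‖f α x‖ < 1 / (m + 1)} :=
      isOpen_lt (hcont α).norm continuous_const
    have hgα : ‖f α (g α)‖ < 1 / (m + 1) := by rw [hg α, norm_zero]; positivity
    obtain ⟨c, hc, hcC⟩ := mem_closure_iff.mp (hKC hα) _ hopen hgα
    exact ⟨c, hcC, hc⟩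
  · intro hsmall
    obtain ⟨x, hxK, hx⟩ := hK.exists_eq_zero_of_forall_exists_norm_lt (hcont α) fun ε hε => by
      obtain ⟨m, hm⟩ := exists_nat_one_div_lt hε
      obtain ⟨c, hcC, hc⟩ := hsmall m
      exact ⟨c, hCK hcC, hc.trans hm⟩
    exact huniq α x hx ▸ hxK

variable [MeasurableSpace S] [MeasurableSpace E] [OpensMeasurableSpace E]

theorem measurableSet_preimage_of_isCompact [PseudoMetrizableSpace X]
    (hmeas : ∀ x, Measurable (f · x)) (hcont : ∀ α, Continuous (f α))
    (hg : ∀ α, f α (g α) = 0) (huniq : ∀ α x, f α x = 0 → x = g α) {K : Set X}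
    (hK : IsCompact K) : MeasurableSet (g ⁻¹' K) := by
  obtain ⟨C, hCK, hCcount, hKC⟩ := hK.isSeparable.exists_countable_dense_subset
  rw [preimage_eq_iInter_iUnion_norm_lt hcont hg huniq hK hCK hKC]
  exact .iInter fun m => .biUnion hCcount fun c _ =>
    measurableSet_lt (hmeas c).norm measurable_const

theorem measurable_of_unique_zero [PseudoMetrizableSpace X]
    [SigmaCompactSpace X] [MeasurableSpace X] [BorelSpace X]
    (hmeas : ∀ x, Measurable (f · x)) (hcont : ∀ α, Continuous (f α))
    (hg : ∀ α, f α (g α) = 0) (huniq : ∀ α x, f α x = 0 → x = g α) : Measurable g := by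
  refine measurable_of_isClosed fun F hF => ?_
  rw [← inter_univ F, ← iUnion_compactCovering, inter_iUnion, preimage_iUnion]
  exact .iUnion fun n => measurableSet_preimage_of_isCompact hmeas hcont hg huniq
    ((isCompact_compactCovering X n).inter_left hF)

end

theorem stmt_14 (S : Type*) [MeasurableSpace S] (L : ℕ)
    (f : S → (Fin L → ℝ) → (Fin L → ℝ))
    (hmeas : ∀ x, Measurable (fun α => f α x))
    (hcont : ∀ α, Continuous (f α))
    (g : S → Fin L → ℝ)
    (hg : ∀ α, f α (g α) = 0)
    (huniq : ∀ α x, f α x = 0 → x = g α) :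
    Measurable g :=
  measurable_of_unique_zero hmeas hcont hg huniq
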